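/- arXiv:2509.19011 — 3 statements merged into one kernel-verified Lean document; each statement's English description precedes it below -/
import Mathlib

section
/- Let 𝒜 be a central arrangement in ℂ^k (k ≥ 1) defined by the reduced polynomial f ∈ ℂ[x₁,…,x_k], and let c𝒜 be its coning in ℂ^{k+1}, defined by x_{k+1}·f. If θ_E, θ₂, …, θ_s is a minimal homogeneous generating set of D(𝒜), then θ_E^{(k+1)}, θ₂, …, θ_s, x_{k+1}∂/∂x_{k+1} is a minimal homogeneous generating set of D(c𝒜), where θ_E^{(k+1)} is the Euler derivation in k+1 variables. In particular, exp(c𝒜) = (1, deg θ_E, deg θ₂, …, deg θ_s). -/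
open MvPolynomial

noncomputable section

/-- The polynomial ring `S = ℂ[x₁,…,x_ℓ]`. -/
abbrev PS (ℓ : ℕ) : Type := MvPolynomial (Fin ℓ) ℂ

/-- The module of ℂ-derivations of `S`. -/
abbrev Der (ℓ : ℕ) : Type := Derivation ℂ (PS ℓ) (PS ℓ)

/-- The logarithmic derivation module of a set of defining forms in a ℂ-algebra. -/
def logDer {R : Type} [CommRing R] [Algebra ℂ R] (A : Set R) :
    Submodule R (Derivation ℂ R R) where
  carrier := {θ | ∀ α ∈ A, θ α ∈ Ideal.span {α}}
  add_mem' := fun ha hb α hα => by simpa using add_mem (ha α hα) (hb α hα)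
  zero_mem' := fun α hα => by simp
  smul_mem' := fun c θ h α hα => by simpa using Ideal.mul_mem_left _ c (h α hα)

/-- The submodule `D₀` of derivations annihilating every defining form. -/
def logDer0 {R : Type} [CommRing R] [Algebra ℂ R] (A : Set R) :
    Submodule R (Derivation ℂ R R) where
  carrier := {θ | ∀ α ∈ A, θ α = 0}
  add_mem' := fun ha hb α hα => by simp [Set.mem_setOf_eq] at *; simp [ha α hα, hb α hα]
  zero_mem' := fun α hα => by simp
  smul_mem' := fun c θ h α hα => by simp [Set.mem_setOf_eq] at *; simp [h α hα]

/-- The Euler derivation `Σ xᵢ ∂ᵢ`. -/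
def euler (ℓ : ℕ) : Der ℓ := mkDerivation ℂ (fun i : Fin ℓ => X i)

/-- A derivation is homogeneous of (polynomial) degree `d` if it sends every variable to a
homogeneous polynomial of degree `d`. -/
def IsHomogDer {ℓ : ℕ} (θ : Der ℓ) (d : ℕ) : Prop := ∀ i, (θ (X i)).IsHomogeneous d

/-- A (nonzero) linear form. -/
def IsLinForm {ℓ : ℕ} (α : PS ℓ) : Prop := α.IsHomogeneous 1 ∧ α ≠ 0

/-- A minimal generating family of the logarithmic derivation module of `A`. -/
def IsMinGen {R : Type} [CommRing R] [Algebra ℂ R] (A : Set R) {s : ℕ}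
    (θ : Fin s → Derivation ℂ R R) : Prop :=
  Submodule.span R (Set.range θ) = logDer A ∧
    ∀ i, θ i ∉ Submodule.span R (θ '' {j | j ≠ i})

/-- A minimal generating family of `D₀(A)`. -/
def IsMinGen0 {R : Type} [CommRing R] [Algebra ℂ R] (A : Set R) {s : ℕ}
    (θ : Fin s → Derivation ℂ R R) : Prop :=
  Submodule.span R (Set.range θ) = logDer0 A ∧
    ∀ i, θ i ∉ Submodule.span R (θ '' {j | j ≠ i})

/-- `exp(A) = M`:  the multiset of degrees of a minimal homogeneous generating family
of `D(A)` is `M`. -/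
def HasExp {ℓ : ℕ} (A : Set (PS ℓ)) (M : Multiset ℕ) : Prop :=
  ∃ (s : ℕ) (θ : Fin s → Der ℓ) (d : Fin s → ℕ),
    (∀ i, IsHomogDer (θ i) (d i)) ∧ IsMinGen A θ ∧ M = Multiset.map d Finset.univ.val

/-- `exp₀(A) = M`: the multiset of degrees of a minimal homogeneous generating family
of `D₀(A)` is `M`. -/
def HasExp0 {ℓ : ℕ} (A : Set (PS ℓ)) (M : Multiset ℕ) : Prop :=
  ∃ (s : ℕ) (θ : Fin s → Der ℓ) (d : Fin s → ℕ),
    (∀ i, IsHomogDer (θ i) (d i)) ∧ IsMinGen0 A θ ∧ M = Multiset.map d Finset.univ.val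

/-- The rank of a finite set of linear forms (= codimension of the corresponding flat). -/
def rk {ℓ : ℕ} (B : Finset (PS ℓ)) : ℕ :=
  Module.finrank ℂ (Submodule.span ℂ (B : Set (PS ℓ)))

/-- `H = {α = 0}` is combinatorially generic with respect to the arrangement `A` in `ℂ^m`:
it contains no nonzero flat of `A`, i.e. adding it to any subarrangement raises the rank
until the ambient rank `m` is reached. -/
def CombGeneric {ℓ : ℕ} (α : PS ℓ) (A : Finset (PS ℓ)) (m : ℕ) : Prop :=
  ∀ B ⊆ A, rk (insert α B) = min (rk B + 1) m

/-- Two arrangements have the same combinatorics (isomorphic intersection lattices):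
there is a bijection of the hyperplanes preserving the rank of every subarrangement. -/
def SameComb {ℓ ℓ' : ℕ} (A₁ : Finset (PS ℓ)) (A₂ : Finset (PS ℓ')) : Prop :=
  ∃ e : PS ℓ → PS ℓ', Set.BijOn e A₁ A₂ ∧
    ∀ B ⊆ A₁, rk (B.image e) = rk B

/-- The number of hyperplanes of the restriction of `A` to `{α = 0}`: the number of
proportionality classes of the (nonzero) images of the forms of `A` in `S/(α)`. -/
def nRes {ℓ : ℕ} (α : PS ℓ) (A : Finset (PS ℓ)) : ℕ :=
  letI : DecidableEq (Submodule ℂ (PS ℓ ⧸ Ideal.span {α})) := Classical.decEq _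
  (A.image fun β =>
    Submodule.span ℂ {Ideal.Quotient.mk (Ideal.span {α}) β}).card

end

noncomputable section

/-- Extend a derivation of `ℂ[x₁,…,x_k]` to a derivation of `ℂ[x₁,…,x_{k+1}]`
acting trivially on the new variable. -/
def extendDer {k : ℕ} (θ : Der k) : Der (k + 1) :=
  mkDerivation ℂ (Fin.snoc (fun i : Fin k => rename Fin.castSucc (θ (X i))) 0)

/-- The derivation `x_{k+1} ∂/∂x_{k+1}`. -/
def lastDer (k : ℕ) : Der (k + 1) :=
  mkDerivation ℂ (fun i : Fin (k + 1) => if i = Fin.last k then X i else 0)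


/-!
Write `y = x_{k+1}`. A logarithmic derivation `ξ` of `c𝒜` has `ξ(y) = q y`, and `ξ - q · y∂_y`
kills `y`; expanding it in powers of `y`, every coefficient is a logarithmic derivation of `𝒜`.
Hence `D(c𝒜)` is generated by `y∂_y` and the extensions of the `θᵢ`, and the extension of `θ_E`
may be replaced by `θ_E^{(k+1)}`, which differs from it by `y∂_y`. For minimality, setting `y = 0`
turns a relation among the new generators into one among the `θᵢ`; in a relation expressing
`y∂_y`, evaluating at `y` shows that `θ_E^{(k+1)}` has coefficient `1`, contradicting the
minimality of `θ_E`.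
-/

lemma Derivation.finset_sum_apply {R A M ι : Type*} [CommSemiring R] [CommSemiring A]
    [Algebra R A] [AddCommMonoid M] [Module A M] [Module R M] (s : Finset ι)
    (D : ι → Derivation R A M) (a : A) : (∑ i ∈ s, D i) a = ∑ i ∈ s, D i a := by
  have := congrFun (map_sum Derivation.coeFnAddMonoidHom D s) a
  rwa [Finset.sum_apply] at this

lemma Multiset.map_univ_snoc {α : Type*} {n : ℕ} (f : Fin n → α) (a : α) :
    Multiset.map (Fin.snoc f a : Fin (n + 1) → α) Finset.univ.val =
      a ::ₘ Multiset.map f Finset.univ.val := by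
  rw [Fin.univ_val_map, Fin.univ_val_map, List.ofFn_succ', List.concat_eq_append,
    ← Multiset.coe_add, add_comm]
  simp

lemma mem_span_image_ne_of_sum_smul_eq_zero {R M ι : Type*} [Ring R] [AddCommGroup M]
    [Module R M] [Fintype ι] [DecidableEq ι] {v : ι → M} {c : ι → R} {i : ι}
    (h : ∑ j, c j • v j = 0) (hi : c i = 1) : v i ∈ Submodule.span R (v '' {j | j ≠ i}) := by
  rw [← Finset.add_sum_erase _ _ (Finset.mem_univ i), hi, one_smul, add_eq_zero_iff_eq_neg] at h
  rw [h]
  refine neg_mem (Submodule.sum_mem _ fun j hj => Submodule.smul_mem _ _ ?_)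
  exact Submodule.subset_span ⟨j, Finset.ne_of_mem_erase hj, rfl⟩

def lastVarEquiv (R : Type*) [CommSemiring R] (n : ℕ) :
    MvPolynomial (Fin (n + 1)) R ≃ₐ[R] Polynomial (MvPolynomial (Fin n) R) :=
  (renameEquiv R finSuccEquivLast).trans (optionEquivLeft R (Fin n))

section LastVarEquiv

variable {R : Type*} [CommSemiring R] {n : ℕ}

@[simp] lemma lastVarEquiv_X_last : lastVarEquiv R n (X (Fin.last n)) = Polynomial.X := by
  simp [lastVarEquiv]

@[simp] lemma lastVarEquiv_X_castSucc (i : Fin n) :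
    lastVarEquiv R n (X i.castSucc) = Polynomial.C (X i) := by
  simp [lastVarEquiv]

@[simp] lemma lastVarEquiv_rename_castSucc (p : MvPolynomial (Fin n) R) :
    lastVarEquiv R n (rename Fin.castSucc p) = Polynomial.C p := by
  induction p using MvPolynomial.induction_on with
  | C a => simp [lastVarEquiv]
  | add p q hp hq => simp [hp, hq]
  | mul_X p i hp => simp [hp]

end LastVarEquiv

section Derivations

variable {k : ℕ}

@[simp] lemma euler_X {ℓ : ℕ} (i : Fin ℓ) : euler ℓ (X i) = X i := mkDerivation_X _ _ _

lemma euler_eq_sum_X_smul_pderiv (ℓ : ℕ) : euler ℓ = ∑ i : Fin ℓ, (X i : PS ℓ) • pderiv i := by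
  classical
  refine derivation_ext fun j => ?_
  simp [Derivation.finset_sum_apply, pderiv_X, Pi.single_apply]

lemma euler_apply_of_isHomogeneous {ℓ n : ℕ} {p : PS ℓ} (hp : p.IsHomogeneous n) :
    euler ℓ p = n • p := by
  simp [← hp.sum_X_mul_pderiv, euler_eq_sum_X_smul_pderiv, Derivation.finset_sum_apply]

@[simp] lemma extendDer_X_castSucc (θ : Der k) (i : Fin k) :
    extendDer θ (X i.castSucc) = rename Fin.castSucc (θ (X i)) := by
  simp [extendDer, mkDerivation_X]

@[simp] lemma extendDer_X_last (θ : Der k) : extendDer θ (X (Fin.last k)) = 0 := by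
  simp [extendDer, mkDerivation_X]

@[simp] lemma lastDer_X_last : lastDer k (X (Fin.last k)) = X (Fin.last k) := by
  simp [lastDer, mkDerivation_X]

@[simp] lemma lastDer_X_castSucc (i : Fin k) : lastDer k (X i.castSucc) = 0 := by
  simp [lastDer, mkDerivation_X, (Fin.castSucc_lt_last i).ne]

lemma extendDer_rename (θ : Der k) (p : PS k) :
    extendDer θ (rename Fin.castSucc p) = rename Fin.castSucc (θ p) := by
  induction p using MvPolynomial.induction_on with
  | C a => simp [← MvPolynomial.algebraMap_eq]
  | add p q hp hq => simp [hp, hq]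
  | mul_X p i hp => simp [hp, Derivation.leibniz]

lemma lastDer_rename (p : PS k) : lastDer k (rename Fin.castSucc p) = 0 := by
  induction p using MvPolynomial.induction_on with
  | C a => simp [← MvPolynomial.algebraMap_eq]
  | add p q hp hq => simp [hp, hq]
  | mul_X p i hp => simp [hp, Derivation.leibniz]

def extendDerₛₗ (k : ℕ) :
    Der k →ₛₗ[(rename (R := ℂ) (Fin.castSucc (n := k))).toRingHom] Der (k + 1) where
  toFun := extendDer
  map_add' θ₁ θ₂ := derivation_ext fun i => by induction i using Fin.lastCases <;> simp
  map_smul' c θ := derivation_ext fun i => by induction i using Fin.lastCases <;> simp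

lemma euler_succ : euler (k + 1) = extendDer (euler k) + lastDer k :=
  derivation_ext fun i => by induction i using Fin.lastCases <;> simp

end Derivations

section Coning

variable {k : ℕ}

def coning (A : Finset (PS k)) : Finset (PS (k + 1)) :=
  insert (X (Fin.last k)) (A.image (rename Fin.castSucc))

lemma mem_coning {A : Finset (PS k)} {β : PS (k + 1)} :
    β ∈ coning A ↔ β = X (Fin.last k) ∨ ∃ α ∈ A, rename Fin.castSucc α = β := by
  simp [coning]

lemma euler_mem_logDer {ℓ : ℕ} {A : Set (PS ℓ)} (hA : ∀ α ∈ A, ∃ n, α.IsHomogeneous n) :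
    euler ℓ ∈ logDer A := by
  intro α hα
  obtain ⟨n, hn⟩ := hA α hα
  rw [euler_apply_of_isHomogeneous hn, nsmul_eq_mul, mul_comm]
  exact Ideal.mul_mem_right _ _ (Ideal.mem_span_singleton_self α)

lemma lastDer_mem_logDer_coning (A : Finset (PS k)) :
    lastDer k ∈ logDer (coning A : Set (PS (k + 1))) := by
  rintro β hβ
  rcases mem_coning.1 hβ with rfl | ⟨α, -, rfl⟩
  · rw [lastDer_X_last]
    exact Ideal.mem_span_singleton_self _
  · rw [lastDer_rename]
    exact zero_mem _

lemma extendDer_mem_logDer_coning {A : Finset (PS k)} {θ : Der k}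
    (hθ : θ ∈ logDer (A : Set (PS k))) : extendDer θ ∈ logDer (coning A : Set (PS (k + 1))) := by
  rintro β hβ
  rcases mem_coning.1 hβ with rfl | ⟨α, hα, rfl⟩
  · rw [extendDer_X_last]
    exact zero_mem _
  · rw [extendDer_rename, ← Set.image_singleton, ← Ideal.map_span]
    exact Ideal.mem_map_of_mem _ (hθ α hα)

end Coning

section Coefficients

variable {k : ℕ}

/-- The `m`-th coefficient of `ξ` in the last variable `y`, restricted to `PS k`:
`ξ(p) = ∑ₘ yᵐ · (coeffDer ξ m)(p)` for `p` not involving `y`. -/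
def coeffDer (ξ : Der (k + 1)) (m : ℕ) : Der k where
  toFun p := (lastVarEquiv ℂ k (ξ (rename Fin.castSucc p))).coeff m
  map_add' p q := by simp
  map_smul' c p := by simp
  map_one_eq_zero' := by simp
  leibniz' p q := by simp [Derivation.leibniz, Polynomial.coeff_C_mul]

@[simp] lemma coeffDer_apply (ξ : Der (k + 1)) (m : ℕ) (p : PS k) :
    coeffDer ξ m p = (lastVarEquiv ℂ k (ξ (rename Fin.castSucc p))).coeff m := rfl

lemma coeffDer_mem_logDer {A : Finset (PS k)} {ξ : Der (k + 1)}
    (hξ : ξ ∈ logDer (coning A : Set (PS (k + 1)))) (m : ℕ) :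
    coeffDer ξ m ∈ logDer (A : Set (PS k)) := by
  intro α hα
  obtain ⟨t, ht⟩ := Ideal.mem_span_singleton'.1 (hξ _ (mem_coning.2 (.inr ⟨α, hα, rfl⟩)))
  refine Ideal.mem_span_singleton'.2 ⟨(lastVarEquiv ℂ k t).coeff m, ?_⟩
  rw [coeffDer_apply, ← ht, map_mul, lastVarEquiv_rename_castSucc, Polynomial.coeff_mul_C]

lemma exists_eq_sum_X_last_pow_smul_extendDer_coeffDer {ξ : Der (k + 1)}
    (hy : ξ (X (Fin.last k)) = 0) :
    ∃ N, ξ = ∑ m ∈ Finset.range N,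
      (X (Fin.last k) : PS (k + 1)) ^ m • extendDer (coeffDer ξ m) := by
  set deg : Fin k → ℕ := fun i => (lastVarEquiv ℂ k (ξ (X i.castSucc))).natDegree
  refine ⟨Finset.univ.sup deg + 1, derivation_ext fun j => ?_⟩
  rw [Derivation.finset_sum_apply]
  induction j using Fin.lastCases with
  | last => simp [hy]
  | cast i =>
    apply (lastVarEquiv ℂ k).injective
    rw [(lastVarEquiv ℂ k _).as_sum_range' _
      (Nat.lt_succ_of_le (Finset.le_sup (f := deg) (Finset.mem_univ i))), map_sum]
    refine Finset.sum_congr rfl fun m _ => ?_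
    rw [Derivation.smul_apply, extendDer_X_castSucc, coeffDer_apply, rename_X, smul_eq_mul,
      map_mul, map_pow, lastVarEquiv_X_last, lastVarEquiv_rename_castSucc, mul_comm,
      Polynomial.C_mul_X_pow_eq_monomial]

abbrev evalLastZero (k : ℕ) : PS (k + 1) →+* PS k :=
  Polynomial.constantCoeff.comp (lastVarEquiv ℂ k).toRingHom

def coeffDerZeroₛₗ (k : ℕ) : Der (k + 1) →ₛₗ[evalLastZero k] Der k where
  toFun ξ := coeffDer ξ 0
  map_add' ξ₁ ξ₂ := Derivation.ext fun p => by simp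
  map_smul' c ξ := Derivation.ext fun p => by simp [Polynomial.mul_coeff_zero]

@[simp] lemma coeffDerZeroₛₗ_apply (ξ : Der (k + 1)) : coeffDerZeroₛₗ k ξ = coeffDer ξ 0 := rfl

@[simp] lemma coeffDer_euler_zero : coeffDer (euler (k + 1)) 0 = euler k :=
  derivation_ext fun i => by simp

@[simp] lemma coeffDer_extendDer_zero (θ : Der k) : coeffDer (extendDer θ) 0 = θ :=
  derivation_ext fun i => by simp

@[simp] lemma coeffDer_lastDer_zero : coeffDer (lastDer k) 0 = 0 :=
  derivation_ext fun i => by simp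

end Coefficients

section ConedFamily

variable {k s : ℕ}

/-- `θ_E^{(k+1)}, θ₂, …, θ_s, x_{k+1}∂_{k+1}`, built from `θ_E = θ 0, θ₂, …, θ_s`. -/
def conedFamily (θ : Fin (s + 1) → Der k) : Fin (s + 1 + 1) → Der (k + 1) :=
  Fin.snoc (fun i : Fin (s + 1) => if i = 0 then euler (k + 1) else extendDer (θ i)) (lastDer k)

lemma conedFamily_castSucc (θ : Fin (s + 1) → Der k) (i : Fin (s + 1)) :
    conedFamily θ i.castSucc = if i = 0 then euler (k + 1) else extendDer (θ i) := by
  simp [conedFamily]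

@[simp] lemma conedFamily_last (θ : Fin (s + 1) → Der k) :
    conedFamily θ (Fin.last (s + 1)) = lastDer k := by
  simp [conedFamily]

lemma coeffDer_conedFamily_castSucc {θ : Fin (s + 1) → Der k} (hθE : θ 0 = euler k)
    (i : Fin (s + 1)) : coeffDer (conedFamily θ i.castSucc) 0 = θ i := by
  rw [conedFamily_castSucc]
  split_ifs with hi
  · rw [hi, hθE, coeffDer_euler_zero]
  · exact coeffDer_extendDer_zero _

lemma extendDer_mem_span_conedFamily {θ : Fin (s + 1) → Der k} (hθE : θ 0 = euler k)
    (i : Fin (s + 1)) :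
    extendDer (θ i) ∈ Submodule.span (PS (k + 1)) (Set.range (conedFamily θ)) := by
  have hmem : ∀ j, conedFamily θ j ∈ Submodule.span (PS (k + 1)) (Set.range (conedFamily θ)) :=
    fun j => Submodule.subset_span ⟨j, rfl⟩
  by_cases hi : i = 0
  · have := sub_mem (hmem (Fin.castSucc 0)) (hmem (Fin.last _))
    rwa [conedFamily_castSucc, if_pos rfl, conedFamily_last, euler_succ, add_sub_cancel_right,
      ← hθE, ← hi] at this
  · simpa [conedFamily_castSucc, hi] using hmem i.castSucc

lemma logDer_coning_le {A : Finset (PS k)} {S : Set (Der k)}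
    (hS : Submodule.span (PS k) S = logDer (A : Set (PS k)))
    {M : Submodule (PS (k + 1)) (Der (k + 1))}
    (hlast : lastDer k ∈ M) (hext : ∀ θ ∈ S, extendDer θ ∈ M) :
    logDer (coning A : Set (PS (k + 1))) ≤ M := by
  intro ξ hξ
  obtain ⟨q, hq⟩ := Ideal.mem_span_singleton'.1 (hξ _ (mem_coning.2 (.inl rfl)))
  have hξ' : ξ - q • lastDer k ∈ logDer (coning A : Set (PS (k + 1))) :=
    sub_mem hξ (Submodule.smul_mem _ _ (lastDer_mem_logDer_coning A))
  have hy : (ξ - q • lastDer k) (X (Fin.last k)) = 0 := by simp [hq]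
  have hext_span : ∀ θ ∈ logDer (A : Set (PS k)), extendDer θ ∈ M := by
    rw [← hS]
    intro θ hθ
    have := Submodule.image_span_subset_span (extendDerₛₗ k) S ⟨θ, hθ, rfl⟩
    exact Submodule.span_le.2 (Set.image_subset_iff.2 hext) this
  obtain ⟨N, hN⟩ := exists_eq_sum_X_last_pow_smul_extendDer_coeffDer hy
  rw [← sub_add_cancel ξ (q • lastDer k), hN]
  exact add_mem (Submodule.sum_mem _ fun m _ => Submodule.smul_mem _ _
    (hext_span _ (coeffDer_mem_logDer hξ' m))) (Submodule.smul_mem _ _ hlast)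

lemma span_conedFamily {A : Finset (PS k)} (hA : ∀ α ∈ A, IsLinForm α)
    {θ : Fin (s + 1) → Der k} (hθE : θ 0 = euler k)
    (hspan : Submodule.span (PS k) (Set.range θ) = logDer (A : Set (PS k))) :
    Submodule.span (PS (k + 1)) (Set.range (conedFamily θ)) =
      logDer (coning A : Set (PS (k + 1))) := by
  refine le_antisymm (Submodule.span_le.2 (Set.range_subset_iff.2 fun j => ?_))
    (logDer_coning_le hspan (Submodule.subset_span ⟨Fin.last _, conedFamily_last θ⟩)
      (Set.forall_mem_range.2 (extendDer_mem_span_conedFamily hθE)))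
  have hθ : ∀ i, θ i ∈ logDer (A : Set (PS k)) := fun i => hspan ▸ Submodule.subset_span ⟨i, rfl⟩
  induction j using Fin.lastCases with
  | last => simpa using lastDer_mem_logDer_coning A
  | cast i =>
    rw [conedFamily_castSucc]
    split_ifs
    · refine euler_mem_logDer fun β hβ => ⟨1, ?_⟩
      rcases mem_coning.1 hβ with rfl | ⟨α, hα, rfl⟩
      · exact isHomogeneous_X ℂ _
      · exact (hA α hα).1.rename_isHomogeneous
    · exact extendDer_mem_logDer_coning (hθ i)

lemma conedFamily_castSucc_not_mem_span {θ : Fin (s + 1) → Der k} (hθE : θ 0 = euler k)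
    {i : Fin (s + 1)} (hmin : θ i ∉ Submodule.span (PS k) (θ '' {j | j ≠ i})) :
    conedFamily θ i.castSucc ∉
      Submodule.span (PS (k + 1)) (conedFamily θ '' {j | j ≠ i.castSucc}) := by
  intro hi
  have hθi := Submodule.image_span_subset_span (coeffDerZeroₛₗ k) _ ⟨_, hi, rfl⟩
  rw [coeffDerZeroₛₗ_apply, coeffDer_conedFamily_castSucc hθE] at hθi
  refine hmin (Submodule.span_le.2 ?_ hθi)
  rintro _ ⟨_, ⟨j, hj, rfl⟩, rfl⟩
  induction j using Fin.lastCases with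
  | last => simp
  | cast j =>
    rw [coeffDerZeroₛₗ_apply, coeffDer_conedFamily_castSucc hθE]
    exact Submodule.subset_span ⟨j, fun h => hj (h ▸ rfl), rfl⟩

lemma conedFamily_last_not_mem_span {θ : Fin (s + 1) → Der k} (hθE : θ 0 = euler k)
    (hmin : θ 0 ∉ Submodule.span (PS k) (θ '' {j | j ≠ 0})) :
    conedFamily θ (Fin.last _) ∉
      Submodule.span (PS (k + 1)) (conedFamily θ '' {j | j ≠ Fin.last _}) := by
  classical
  have himg : conedFamily θ '' {j | j ≠ Fin.last _} =
      Set.range (conedFamily θ ∘ Fin.castSucc) := by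
    rw [Set.range_comp, ← Fin.succAbove_last, Fin.range_succAbove]
    rfl
  rw [himg, Submodule.mem_span_range_iff_exists_fun]
  rintro ⟨c, hc⟩
  have hc0 : c 0 = 1 := by
    have hy := congrArg (fun ξ : Der (k + 1) => ξ (X (Fin.last k))) hc
    simp only [Derivation.finset_sum_apply, Function.comp_apply, conedFamily_castSucc,
      apply_ite (fun ξ : Der (k + 1) => ξ (X (Fin.last k))), euler_X, extendDer_X_last,
      conedFamily_last, lastDer_X_last, Derivation.smul_apply, smul_eq_mul, mul_ite,
      mul_zero, Finset.sum_ite_eq', Finset.mem_univ, if_true] at hy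
    exact mul_right_cancel₀ (X_ne_zero (Fin.last k)) (hy.trans (one_mul _).symm)
  have hrel : ∑ j, evalLastZero k (c j) • θ j = 0 := by
    have := congrArg (coeffDerZeroₛₗ k) hc
    rw [map_sum, conedFamily_last, coeffDerZeroₛₗ_apply, coeffDer_lastDer_zero] at this
    rw [← this]
    refine Finset.sum_congr rfl fun j _ => ?_
    rw [LinearMap.map_smulₛₗ, Function.comp_apply, coeffDerZeroₛₗ_apply,
      coeffDer_conedFamily_castSucc hθE]
  exact hmin (mem_span_image_ne_of_sum_smul_eq_zero hrel (by simp [hc0]))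

lemma conedFamily_not_mem_span {θ : Fin (s + 1) → Der k} (hθE : θ 0 = euler k)
    (hmin : ∀ i, θ i ∉ Submodule.span (PS k) (θ '' {j | j ≠ i})) (i : Fin (s + 1 + 1)) :
    conedFamily θ i ∉ Submodule.span (PS (k + 1)) (conedFamily θ '' {j | j ≠ i}) := by
  induction i using Fin.lastCases with
  | last => exact conedFamily_last_not_mem_span hθE (hmin 0)
  | cast i => exact conedFamily_castSucc_not_mem_span hθE (hmin i)

end ConedFamily

section Homogeneity

variable {k s : ℕ}

lemma isHomogDer_euler (ℓ : ℕ) : IsHomogDer (euler ℓ) 1 := fun i => by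
  simpa using isHomogeneous_X ℂ i

lemma isHomogDer_lastDer (k : ℕ) : IsHomogDer (lastDer k) 1 := fun i => by
  induction i using Fin.lastCases with
  | last => simpa using isHomogeneous_X ℂ _
  | cast i => simpa using isHomogeneous_zero _ _ _

lemma IsHomogDer.extendDer {θ : Der k} {d : ℕ} (h : IsHomogDer θ d) :
    IsHomogDer (extendDer θ) d := fun i => by
  induction i using Fin.lastCases with
  | last => simpa using isHomogeneous_zero _ _ _
  | cast i => simpa using (h i).rename_isHomogeneous

lemma isHomogDer_conedFamily {θ : Fin (s + 1) → Der k} {d : Fin (s + 1) → ℕ}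
    (hd0 : d 0 = 1) (hhom : ∀ i, IsHomogDer (θ i) (d i)) (j : Fin (s + 1 + 1)) :
    IsHomogDer (conedFamily θ j) ((Fin.snoc d 1 : Fin (s + 1 + 1) → ℕ) j) := by
  induction j using Fin.lastCases with
  | last => simpa using isHomogDer_lastDer k
  | cast i =>
    rw [conedFamily_castSucc, Fin.snoc_castSucc]
    split_ifs with hi
    · rw [hi, hd0]
      exact isHomogDer_euler (k + 1)
    · exact (hhom i).extendDer

end Homogeneity

theorem coning_minimal_generators_general {k : ℕ} (A : Finset (PS k))
    (hA : ∀ α ∈ A, IsLinForm α)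
    {s : ℕ} (θ : Fin (s + 1) → Der k) (d : Fin (s + 1) → ℕ)
    (hθE : θ 0 = euler k) (hd0 : d 0 = 1)
    (hhom : ∀ i, IsHomogDer (θ i) (d i))
    (hmin : IsMinGen (A : Set (PS k)) θ) :
    (IsMinGen
      ((insert (X (Fin.last k)) (A.image (rename Fin.castSucc)) : Finset (PS (k + 1))) :
        Set (PS (k + 1)))
      (Fin.snoc (fun i : Fin (s + 1) =>
          if i = 0 then euler (k + 1) else extendDer (θ i)) (lastDer k))) ∧
    (∀ i : Fin (s + 1), i ≠ 0 → IsHomogDer (extendDer (θ i)) (d i)) ∧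
    IsHomogDer (euler (k + 1)) 1 ∧ IsHomogDer (lastDer k) 1 ∧
    HasExp
      ((insert (X (Fin.last k)) (A.image (rename Fin.castSucc)) : Finset (PS (k + 1))) :
        Set (PS (k + 1)))
      (1 ::ₘ Multiset.map d Finset.univ.val) := by
  have hcone : IsMinGen (coning A : Set (PS (k + 1))) (conedFamily θ) :=
    ⟨span_conedFamily hA hθE hmin.1, conedFamily_not_mem_span hθE hmin.2⟩
  refine ⟨hcone, fun i _ => (hhom i).extendDer, isHomogDer_euler _, isHomogDer_lastDer k,
    s + 2, conedFamily θ, Fin.snoc d 1, isHomogDer_conedFamily hd0 hhom, hcone, ?_⟩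
  rw [Multiset.map_univ_snoc]

/-- if `θ_E, θ₂, …, θ_s` minimally generate `D(𝒜)`, then
`θ_E^{(k+1)}, θ₂, …, θ_s, x_{k+1}∂_{k+1}` minimally generate `D(c𝒜)` for the coning `c𝒜`;
in particular `exp(c𝒜) = (1, deg θ_E, deg θ₂, …, deg θ_s)`. -/
theorem coning_minimal_generators {k : ℕ} (A : Finset (PS k))
    (hA : ∀ α ∈ A, IsLinForm α) (hred : ∀ α ∈ A, ∀ β ∈ A, α ≠ β → ∀ c : ℂ, α ≠ c • β)
    {s : ℕ} (θ : Fin (s + 1) → Der k) (d : Fin (s + 1) → ℕ)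
    (hθE : θ 0 = euler k) (hd0 : d 0 = 1)
    (hhom : ∀ i, IsHomogDer (θ i) (d i))
    (hmin : IsMinGen (A : Set (PS k)) θ) :
    (IsMinGen
      ((insert (X (Fin.last k)) (A.image (rename Fin.castSucc)) : Finset (PS (k + 1))) :
        Set (PS (k + 1)))
      (Fin.snoc (fun i : Fin (s + 1) =>
          if i = 0 then euler (k + 1) else extendDer (θ i)) (lastDer k))) ∧
    (∀ i : Fin (s + 1), i ≠ 0 → IsHomogDer (extendDer (θ i)) (d i)) ∧
    IsHomogDer (euler (k + 1)) 1 ∧ IsHomogDer (lastDer k) 1 ∧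
    HasExp
      ((insert (X (Fin.last k)) (A.image (rename Fin.castSucc)) : Finset (PS (k + 1))) :
        Set (PS (k + 1)))
      (1 ::ₘ Multiset.map d Finset.univ.val) :=
  coning_minimal_generators_general A hA θ d hθE hd0 hhom hmin
end
end

section
/- Let 𝒜 be an arrangement in ℂ³, let 𝒜_ℓ ⊂ ℂ^ℓ be obtained from 𝒜 by (ℓ−3) successive conings (adding coordinate hyperplanes x_j = 0 for j = 4,…,ℓ), and let H ⊂ ℂ^ℓ be a hyperplane combinatorially generic with respect to 𝒜_ℓ. For 3 ≤ k ≤ ℓ set H_k := H ∩ {x_{k+1}=0} ∩ … ∩ {x_ℓ=0}, a hyperplane in ℂ^k, and let 𝒜_k denote the (k−3)-fold coning of 𝒜. Then H_k is combinatorially generic with respect to 𝒜_k for every k = 3, …, ℓ. -/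
open MvPolynomial

noncomputable section

/-- The coordinate hyperplanes `x_{j} = 0` for `3 ≤ j < k` (0-indexed), i.e. the
hyperplanes `x₄,…,x_k` added by the successive conings. -/
def coningCoords (ℓ k : ℕ) : Finset (PS ℓ) :=
  letI : DecidableEq (PS ℓ) := Classical.decEq _
  (Finset.univ.filter fun j : Fin ℓ => 3 ≤ (j : ℕ) ∧ (j : ℕ) < k).image X

/-- Setting the variables `x_{k+1}, …, x_ℓ` to zero (0-indexed: variables of index `≥ k`). -/
def truncTo (ℓ k : ℕ) : PS ℓ →ₐ[ℂ] PS ℓ :=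
  aeval fun j : Fin ℓ => if (j : ℕ) < k then X j else 0

/-! Split the linear forms on `ℂ^ℓ` as `L ⊕ L'`, with `L` spanned by `x₁, …, x_k` and `L'` by
`x_{k+1}, …, x_ℓ`. The forms of `𝒜_k` and `α_{H_k}` lie in `L`, while `α_H - α_{H_k}` lies in `L'`,
which is spanned by the coordinate forms `T = {x_{k+1}, …, x_ℓ} ⊆ 𝒜_ℓ`. For `B ⊆ 𝒜_k`, apply the
genericity of `H` to `B ∪ T`: ranks add over `L ⊕ L'`, so `rk (B ∪ T) = rk B + (ℓ - k)` and
`rk ({α_H} ∪ B ∪ T) = rk ({α_{H_k}} ∪ B) + (ℓ - k)`; cancelling `ℓ - k` gives the genericity of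
`H_k`. -/

open Submodule Set

section ZeroVarsOutside

variable {σ R : Type*} [CommRing R] (s : Set σ) [DecidablePred (· ∈ s)]

def zeroVarsOutside : MvPolynomial σ R →ₐ[R] MvPolynomial σ R :=
  aeval fun j => if j ∈ s then X j else 0

lemma zeroVarsOutside_mem_span_X {f : MvPolynomial σ R} (hf : f ∈ span R (range X)) :
    zeroVarsOutside s f ∈ span R (X '' s) := by
  refine (span_le (p := (span R (X '' s)).comap (zeroVarsOutside s).toLinearMap)).2 ?_ hf
  rintro _ ⟨i, rfl⟩
  by_cases hi : i ∈ s
  · simpa [zeroVarsOutside, hi] using subset_span (mem_image_of_mem X hi)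
  · simp [zeroVarsOutside, hi]

lemma sub_zeroVarsOutside_mem_span_X {f : MvPolynomial σ R} (hf : f ∈ span R (range X)) :
    f - zeroVarsOutside s f ∈ span R (X '' sᶜ) := by
  refine (span_le (p := (span R (X '' sᶜ)).comap
    (LinearMap.id - (zeroVarsOutside s).toLinearMap))).2 ?_ hf
  rintro _ ⟨i, rfl⟩
  by_cases hi : i ∈ s
  · simp [zeroVarsOutside, hi]
  · simpa [zeroVarsOutside, hi] using subset_span (mem_image_of_mem X (mem_compl hi))

lemma zeroVarsOutside_eq_self {f : MvPolynomial σ R} (hf : f ∈ supported R s) :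
    zeroVarsOutside s f = f := by
  obtain ⟨g, rfl⟩ := (supported_eq_range_rename s).le hf
  change ((zeroVarsOutside s).comp (rename _)) g = rename _ g
  congr 1
  ext j : 1
  simp [zeroVarsOutside, j.2]

end ZeroVarsOutside

lemma MvPolynomial.IsHomogeneous.mem_span_X_image_of_mem_supported {σ R : Type*} [CommRing R]
    {f : MvPolynomial σ R} (hf : f.IsHomogeneous 1)
    {s : Set σ} (hs : f ∈ supported R s) : f ∈ span R (X '' s) := by
  classical
  rw [← zeroVarsOutside_eq_self s hs]
  exact zeroVarsOutside_mem_span_X s (homogeneousSubmodule_one_eq_span_X (σ := σ) (R := R) ▸ hf)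

lemma span_insert_eq_of_sub_mem {R M : Type*} [Ring R] [AddCommGroup M] [Module R M] {a b : M}
    {s : Set M} (h : a - b ∈ span R s) : span R (insert a s) = span R (insert b s) := by
  have key : ∀ {a b : M}, a - b ∈ span R s → span R (insert a s) ≤ span R (insert b s) :=
    fun {a b} h => span_le.2 <| insert_subset
      (mem_span_insert.2 ⟨1, a - b, h, by simp⟩) ((subset_insert b s).trans subset_span)
  exact le_antisymm (key h) (key (by simpa using neg_mem h))

section Rank

variable {n : ℕ}

lemma rk_insert_eq_of_sub_mem {a b : PS n} {S : Finset (PS n)}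
    (h : a - b ∈ span ℂ (S : Set (PS n))) : rk (insert a S) = rk (insert b S) := by
  rw [rk, rk, Finset.coe_insert, Finset.coe_insert, span_insert_eq_of_sub_mem h]

lemma rk_union_of_disjoint {S T : Finset (PS n)}
    (h : Disjoint (span ℂ (S : Set (PS n))) (span ℂ (T : Set (PS n)))) :
    rk (S ∪ T) = rk S + rk T := by
  have := finrank_sup_add_finrank_inf_eq (span ℂ (S : Set (PS n))) (span ℂ (T : Set (PS n)))
  rw [h.eq_bot, finrank_bot, add_zero] at this
  rw [rk, Finset.coe_union, span_union, this, rk, rk]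

lemma rk_image_X (s : Finset (Fin n)) : rk (s.image X) = s.card := by
  rw [rk, finrank_span_finset_eq_card, Finset.card_image_of_injective _ X_injective]
  rw [Finset.coe_image]
  exact ((linearIndependent_X (Fin n) ℂ).linearIndepOn _).id_image

end Rank

section Coning

variable {ℓ : ℕ}

lemma mem_coningCoords {k : ℕ} {f : PS ℓ} :
    f ∈ coningCoords ℓ k ↔ ∃ j : Fin ℓ, (3 ≤ (j : ℕ) ∧ (j : ℕ) < k) ∧ X j = f := by
  simp [coningCoords]

lemma coningCoords_mono {k k' : ℕ} (h : k ≤ k') : coningCoords ℓ k ⊆ coningCoords ℓ k' := by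
  intro f hf
  obtain ⟨j, ⟨h3, hk⟩, rfl⟩ := mem_coningCoords.1 hf
  exact mem_coningCoords.2 ⟨j, ⟨h3, hk.trans_le h⟩, rfl⟩

lemma span_le_span_X_of_subset_coning {A B : Finset (PS ℓ)} {k : ℕ} (hk : 3 ≤ k)
    (hA : ∀ β ∈ A, β.IsHomogeneous 1 ∧ β ∈ supported ℂ {i : Fin ℓ | (i : ℕ) < 3})
    (hB : B ⊆ A ∪ coningCoords ℓ k) :
    span ℂ (B : Set (PS ℓ)) ≤ span ℂ (X '' {j : Fin ℓ | (j : ℕ) < k}) := by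
  refine span_le.2 fun β hβ => ?_
  rcases Finset.mem_union.1 (hB hβ) with hβA | hβC
  · obtain ⟨hβhom, hβ3⟩ := hA β hβA
    exact hβhom.mem_span_X_image_of_mem_supported
      (supported_mono (fun _ hi => Nat.lt_of_lt_of_le hi hk) hβ3)
  · obtain ⟨j, ⟨-, hj⟩, rfl⟩ := mem_coningCoords.1 hβC
    exact subset_span (mem_image_of_mem X hj)

def truncCoords (ℓ k : ℕ) : Finset (PS ℓ) :=
  (Finset.univ.filter fun j : Fin ℓ => (j : ℕ) < k)ᶜ.image X

lemma coe_truncCoords (k : ℕ) :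
    (truncCoords ℓ k : Set (PS ℓ)) = X '' {j : Fin ℓ | (j : ℕ) < k}ᶜ := by
  rw [truncCoords, Finset.coe_image, Finset.coe_compl, Finset.coe_filter]
  simp only [Finset.mem_univ, true_and]

lemma rk_truncCoords (k : ℕ) : rk (truncCoords ℓ k) = ℓ - min ℓ k := by
  rw [truncCoords, rk_image_X, Finset.card_compl, Fintype.card_fin, Fin.card_filter_val_lt]

lemma truncCoords_subset_coningCoords {k : ℕ} (hk : 3 ≤ k) :
    truncCoords ℓ k ⊆ coningCoords ℓ ℓ := by
  intro f hf
  obtain ⟨j, hj, rfl⟩ := Finset.mem_image.1 hf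
  simp only [Finset.mem_compl, Finset.mem_filter, Finset.mem_univ, true_and, not_lt] at hj
  exact mem_coningCoords.2 ⟨j, ⟨hk.trans hj, j.isLt⟩, rfl⟩

lemma disjoint_span_truncCoords {k : ℕ} {V : Submodule ℂ (PS ℓ)}
    (hV : V ≤ span ℂ (X '' {j : Fin ℓ | (j : ℕ) < k})) :
    Disjoint V (span ℂ (truncCoords ℓ k : Set (PS ℓ))) := by
  rw [coe_truncCoords]
  exact ((linearIndependent_X (Fin ℓ) ℂ).disjoint_span_image disjoint_compl_right).mono_left hV

end Coning

theorem truncated_generic_hyperplane_general {ℓ : ℕ} (A : Finset (PS ℓ))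
    (hA : ∀ β ∈ A, IsLinForm β ∧ β ∈ MvPolynomial.supported ℂ {i : Fin ℓ | (i : ℕ) < 3})
    (αH : PS ℓ) (hαlin : IsLinForm αH)
    (hgen : CombGeneric αH (A ∪ coningCoords ℓ ℓ) ℓ) :
    ∀ k, 3 ≤ k → k ≤ ℓ →
      CombGeneric (truncTo ℓ k αH) (A ∪ coningCoords ℓ k) k := by
  intro k hk3 hkl B hB
  set s : Set (Fin ℓ) := {j | (j : ℕ) < k}
  have htrunc : truncTo ℓ k = zeroVarsOutside s := rfl
  set C := truncCoords ℓ k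
  have hαH : αH ∈ span ℂ (range X) :=
    homogeneousSubmodule_one_eq_span_X (σ := Fin ℓ) (R := ℂ) ▸ hαlin.1
  have hBs : span ℂ (B : Set (PS ℓ)) ≤ span ℂ (X '' s) :=
    span_le_span_X_of_subset_coning hk3 (fun β hβ => ⟨(hA β hβ).1.1, (hA β hβ).2⟩) hB
  have htB : span ℂ ((insert (zeroVarsOutside s αH) B : Finset (PS ℓ)) : Set (PS ℓ)) ≤
      span ℂ (X '' s) := by
    rw [Finset.coe_insert, span_insert]
    exact sup_le ((span_singleton_le_iff_mem _ _).2 (zeroVarsOutside_mem_span_X s hαH)) hBs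
  have hsub : αH - zeroVarsOutside s αH ∈ span ℂ ((B ∪ C : Finset (PS ℓ)) : Set (PS ℓ)) :=
    span_mono (by rw [Finset.coe_union, coe_truncCoords]; exact subset_union_right)
      (sub_zeroVarsOutside_mem_span_X s hαH)
  have hrank := hgen (B ∪ C) (Finset.union_subset
    (hB.trans (Finset.union_subset_union_right (coningCoords_mono hkl)))
    ((truncCoords_subset_coningCoords hk3).trans Finset.subset_union_right))
  rw [rk_insert_eq_of_sub_mem hsub, ← Finset.insert_union,
    rk_union_of_disjoint (disjoint_span_truncCoords htB),
    rk_union_of_disjoint (disjoint_span_truncCoords hBs), rk_truncCoords] at hrank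
  rw [htrunc]
  omega

/-- if `H` is combinatorially generic with respect to the iterated coning
`𝒜_ℓ` of a rank-3 arrangement `𝒜`, then each `H_k = H ∩ {x_{k+1} = 0} ∩ … ∩ {x_ℓ = 0}` is
combinatorially generic with respect to the `(k−3)`-fold coning `𝒜_k`, `3 ≤ k ≤ ℓ`. -/
theorem truncated_generic_hyperplane {ℓ : ℕ} (hℓ : 3 ≤ ℓ) (A : Finset (PS ℓ))
    (hA : ∀ β ∈ A, IsLinForm β ∧ β ∈ MvPolynomial.supported ℂ {i : Fin ℓ | (i : ℕ) < 3})
    (αH : PS ℓ) (hαlin : IsLinForm αH)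
    (hgen : CombGeneric αH (A ∪ coningCoords ℓ ℓ) ℓ) :
    ∀ k, 3 ≤ k → k ≤ ℓ →
      CombGeneric (truncTo ℓ k αH) (A ∪ coningCoords ℓ k) k :=
  truncated_generic_hyperplane_general A hA αH hαlin hgen

end
end

section
/- Let ρ : D(𝓑_k) → D(𝓑_{k−1}) = D(𝓑_k^{H_k}) be the Euler restriction map at the hyperplane H_k, where coordinates are normalized so that the restriction to H_k is given by substituting x_k ↦ −α_{H_{k−1}} (equivalently x̄_k = −α_{H_{k−1}} in S/(α_{H_k})). Then for θ_i a derivation involving only x₁,x₂,x₃ with θ_i ∈ D(𝒜), one has ρ(φ_i^k) = −α_{H_{k−1}} θ_i, where φ_i^k := x_k θ_i − θ_i(α_H)(x_k ∂/∂x_k). Moreover, for 4 ≤ i < k, ρ(η_i^k) = −α_{H_{k−1}} x_i ∂/∂x_i, where η_i^k = x_i x_k(∂_{x_i} − ∂_{x_k}). -/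
open MvPolynomial

/-!
Restriction to `H_k` is the substitution `σ : x_k ↦ −α_{H_{k−1}}`. After composing with `σ`,
both sides of each identity are derivations twisted by `σ`, so it suffices to compare them on
the variables. There it is a direct computation: `σ` fixes `θ(x_t)` and `θ(α_{H_{k−1}})`,
which do not involve `x_k`, and `∂_i α_{H_{k−1}} = 1`.
-/

namespace MvPolynomial

section CommSemiring

variable {R ι : Type*} [CommSemiring R]

theorem algHom_derivation_eq_of_forall_X {B : Type*} [CommSemiring B] [Algebra R B]
    (φ : MvPolynomial ι R →ₐ[R] B) (D : Derivation R (MvPolynomial ι R) (MvPolynomial ι R))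
    (E : Derivation R B B) (h : ∀ i, φ (D (X i)) = E (φ (X i))) (f : MvPolynomial ι R) :
    φ (D f) = E (φ f) := by
  induction f using MvPolynomial.induction_on with
  | C a => simp [derivation_C]
  | add f g hf hg => simp only [map_add, hf, hg]
  | mul_X f i hf =>
    simp only [Derivation.leibniz, smul_eq_mul, map_add, map_mul, hf, h]

theorem derivation_mem_supported {s : Set ι}
    (D : Derivation R (MvPolynomial ι R) (MvPolynomial ι R))
    (hD : ∀ i ∈ s, D (X i) ∈ supported R s) {p : MvPolynomial ι R}
    (hp : p ∈ supported R s) : D p ∈ supported R s := by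
  induction hp using Algebra.adjoin_induction with
  | mem x hx =>
    obtain ⟨i, hi, rfl⟩ := hx
    exact hD i hi
  | algebraMap r => simp
  | add x y _ _ hx hy => rw [map_add]; exact add_mem hx hy
  | mul x y hx' hy' hx hy =>
    rw [Derivation.leibniz, smul_eq_mul, smul_eq_mul]
    exact add_mem (mul_mem hx' hy) (mul_mem hy' hx)

theorem aeval_eq_self_of_mem_supported {s : Set ι} {g : ι → MvPolynomial ι R}
    (hg : ∀ i ∈ s, g i = X i) {p : MvPolynomial ι R} (hp : p ∈ supported R s) :
    aeval g p = p := by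
  have : Set.EqOn (aeval g) (AlgHom.id R _) (supported R s) :=
    AlgHom.eqOn_adjoin_iff.mpr (by rintro _ ⟨i, hi, rfl⟩; simp [hg i hi])
  exact this hp

end CommSemiring

variable {R ι : Type*} [CommRing R]

variable (R) in
/-- `φ_i^k` of the paper, for `θ = θ_i` and `α = α_{H_k}`. -/
noncomputable def phiDer (k : ι) (α : MvPolynomial ι R)
    (θ : Derivation R (MvPolynomial ι R) (MvPolynomial ι R)) :
    Derivation R (MvPolynomial ι R) (MvPolynomial ι R) :=
  (X k : MvPolynomial ι R) • θ - (θ α * X k) • pderiv k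

variable (R) in
/-- `η_i^k` of the paper. -/
noncomputable def etaDer (i k : ι) : Derivation R (MvPolynomial ι R) (MvPolynomial ι R) :=
  (X i * X k : MvPolynomial ι R) • (pderiv i - pderiv k)

theorem phiDer_apply (k : ι) (α : MvPolynomial ι R)
    (θ : Derivation R (MvPolynomial ι R) (MvPolynomial ι R)) (f : MvPolynomial ι R) :
    phiDer R k α θ f = X k * θ f - θ α * (X k * pderiv k f) := by
  simp only [phiDer, Derivation.sub_apply, Derivation.smul_apply, smul_eq_mul, mul_assoc]

theorem etaDer_apply (i k : ι) (f : MvPolynomial ι R) :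
    etaDer R i k f = X i * X k * (pderiv i f - pderiv k f) := by
  simp only [etaDer, Derivation.smul_apply, Derivation.sub_apply, smul_eq_mul]

variable [DecidableEq ι]

noncomputable def substVar (k : ι) (p : MvPolynomial ι R) : MvPolynomial ι R →ₐ[R] MvPolynomial ι R :=
  aeval fun i => if i = k then p else X i

@[simp]
theorem substVar_X_self (k : ι) (p : MvPolynomial ι R) : substVar k p (X k) = p := by
  simp [substVar]

theorem substVar_X_of_ne {i k : ι} (p : MvPolynomial ι R) (h : i ≠ k) :
    substVar k p (X i) = X i := by
  simp [substVar, h]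

theorem substVar_eq_self_of_mem_supported {k : ι} (p : MvPolynomial ι R) {q : MvPolynomial ι R}
    (hq : q ∈ supported R {i | i ≠ k}) : substVar k p q = q :=
  aeval_eq_self_of_mem_supported (fun _ hi => if_neg hi) hq

theorem substVar_phiDer {k : ι} {a : MvPolynomial ι R} (ha : a ∈ supported R {i | i ≠ k})
    (θ : Derivation R (MvPolynomial ι R) (MvPolynomial ι R))
    (hθ : ∀ i, θ (X i) ∈ supported R {i | i ≠ k}) (f : MvPolynomial ι R) :
    substVar k (-a) (phiDer R k (a + X k) θ f) = -a * θ (substVar k (-a) f) := by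
  have hθa : θ a ∈ supported R {i | i ≠ k} := derivation_mem_supported θ (fun i _ => hθ i) ha
  refine algHom_derivation_eq_of_forall_X _ _ ((-a) • θ) (fun i => ?_) f
  rw [phiDer_apply, Derivation.smul_apply, smul_eq_mul]
  rcases eq_or_ne i k with rfl | hik
  · simp only [pderiv_X_self, mul_one, map_add, map_sub, map_mul, map_neg, substVar_X_self,
      substVar_eq_self_of_mem_supported _ (hθ i), substVar_eq_self_of_mem_supported _ hθa]
    ring
  · simp [substVar_X_of_ne _ hik, pderiv_X_of_ne hik, substVar_eq_self_of_mem_supported _ (hθ i)]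

theorem substVar_etaDer {i k : ι} (hik : i ≠ k) {a : MvPolynomial ι R} (ha : pderiv i a = 1)
    (f : MvPolynomial ι R) :
    substVar k (-a) (etaDer R i k f) = -a * X i * pderiv i (substVar k (-a) f) := by
  refine algHom_derivation_eq_of_forall_X _ _ ((-a * X i) • pderiv i) (fun t => ?_) f
  rw [etaDer_apply, Derivation.smul_apply, smul_eq_mul]
  rcases eq_or_ne t k with rfl | htk
  · simp only [pderiv_X_self, pderiv_X_of_ne hik.symm, map_mul, map_sub, map_neg, map_zero,
      map_one, substVar_X_of_ne _ hik, substVar_X_self, ha]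
    ring
  rcases eq_or_ne t i with rfl | hti
  · simp only [pderiv_X_self, pderiv_X_of_ne htk, map_mul, map_sub, map_zero, map_one,
      substVar_X_of_ne _ htk, substVar_X_self]
    ring
  · simp [substVar_X_of_ne _ htk, pderiv_X_of_ne htk, pderiv_X_of_ne hti]

end MvPolynomial

theorem euler_restriction_of_phi_and_eta_general {ℓ : ℕ} (hℓ : 3 ≤ ℓ)
    (αprev : PS (ℓ + 1))
    (hprevsupp : αprev ∈ MvPolynomial.supported ℂ {t : Fin (ℓ + 1) | t ≠ Fin.last ℓ})
    (hnorm : ∀ i : Fin (ℓ + 1), 3 ≤ (i : ℕ) → (i : ℕ) < ℓ → pderiv i αprev = 1)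
    (θ : Der (ℓ + 1))
    (hθsupp : ∀ i : Fin (ℓ + 1),
      θ (X i) ∈ MvPolynomial.supported ℂ {t : Fin (ℓ + 1) | (t : ℕ) < 3} ∧
        (3 ≤ (i : ℕ) → θ (X i) = 0)) :
    -- the substitution `x_k ↦ −α_{H_{k−1}}` realizing the Euler restriction:
    letI σ : PS (ℓ + 1) →ₐ[ℂ] PS (ℓ + 1) :=
      aeval (fun i : Fin (ℓ + 1) => if i = Fin.last ℓ then -αprev else X i)
    -- `ρ(φ^k) = −α_{H_{k−1}} θ`:
    (∀ f : PS (ℓ + 1),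
      σ ((X (Fin.last ℓ) : PS (ℓ + 1)) * θ f -
          θ (αprev + X (Fin.last ℓ)) * (X (Fin.last ℓ) * pderiv (Fin.last ℓ) f)) =
        -αprev * θ (σ f)) ∧
    -- `ρ(η_i^k) = −α_{H_{k−1}} x_i ∂_{x_i}` for `4 ≤ i < k`:
    (∀ i : Fin (ℓ + 1), 3 ≤ (i : ℕ) → (i : ℕ) < ℓ →
      ∀ f : PS (ℓ + 1),
        σ ((X i : PS (ℓ + 1)) * X (Fin.last ℓ) *
            (pderiv i f - pderiv (Fin.last ℓ) f)) =
          -(αprev * (X i * pderiv i (σ f)))) := by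
  have hsub : {t : Fin (ℓ + 1) | (t : ℕ) < 3} ⊆ {t | t ≠ Fin.last ℓ} := by
    rintro t (ht : (t : ℕ) < 3) rfl
    rw [Fin.val_last] at ht
    omega
  have hθ : ∀ i, θ (X i) ∈ supported ℂ {t : Fin (ℓ + 1) | t ≠ Fin.last ℓ} := fun i =>
    supported_mono hsub (hθsupp i).1
  refine ⟨fun f => ?_, fun i hi3 hiℓ f => ?_⟩
  · rw [← phiDer_apply]
    exact substVar_phiDer hprevsupp θ hθ f
  · have hik : i ≠ Fin.last ℓ := fun hlast => by simp [hlast] at hiℓ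
    rw [← etaDer_apply]
    have h := substVar_etaDer hik (hnorm i hi3 hiℓ) f
    rw [neg_mul, neg_mul, mul_assoc] at h
    exact h

/-- computation of the Euler restriction at `H_k`.  With coordinates
normalized so that `α_{H_k} = α_{H_{k−1}} + x_k` (so restriction to `H_k` is the
substitution `x_k ↦ −α_{H_{k−1}}`, realized by the algebra map `σ`), for a derivation `θ`
involving only `x₁,x₂,x₃` with `θ ∈ D(𝒜)` one has `ρ(φ^k) = −α_{H_{k−1}} θ` for
`φ^k = x_k θ − θ(α_H)(x_k ∂_{x_k})`, and `ρ(η_i^k) = −α_{H_{k−1}} x_i ∂_{x_i}` for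
`η_i^k = x_i x_k (∂_{x_i} − ∂_{x_k})`, `4 ≤ i < k`. -/
theorem euler_restriction_of_phi_and_eta {ℓ : ℕ} (hℓ : 3 ≤ ℓ)
    (A : Finset (PS (ℓ + 1)))
    (hA : ∀ β ∈ A, IsLinForm β ∧
      β ∈ MvPolynomial.supported ℂ {t : Fin (ℓ + 1) | (t : ℕ) < 3})
    (αprev : PS (ℓ + 1)) (hαlin : (αprev + X (Fin.last ℓ)).IsHomogeneous 1)
    (hprevsupp : αprev ∈ MvPolynomial.supported ℂ {t : Fin (ℓ + 1) | t ≠ Fin.last ℓ})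
    (hnorm : ∀ i : Fin (ℓ + 1), 3 ≤ (i : ℕ) → (i : ℕ) < ℓ → pderiv i αprev = 1)
    (θ : Der (ℓ + 1)) (hθ : θ ∈ logDer (A : Set (PS (ℓ + 1))))
    (hθsupp : ∀ i : Fin (ℓ + 1),
      θ (X i) ∈ MvPolynomial.supported ℂ {t : Fin (ℓ + 1) | (t : ℕ) < 3} ∧
        (3 ≤ (i : ℕ) → θ (X i) = 0)) :
    -- the substitution `x_k ↦ −α_{H_{k−1}}` realizing the Euler restriction:
    letI σ : PS (ℓ + 1) →ₐ[ℂ] PS (ℓ + 1) :=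
      aeval (fun i : Fin (ℓ + 1) => if i = Fin.last ℓ then -αprev else X i)
    -- `ρ(φ^k) = −α_{H_{k−1}} θ`:
    (∀ f : PS (ℓ + 1),
      σ ((X (Fin.last ℓ) : PS (ℓ + 1)) * θ f -
          θ (αprev + X (Fin.last ℓ)) * (X (Fin.last ℓ) * pderiv (Fin.last ℓ) f)) =
        -αprev * θ (σ f)) ∧
    -- `ρ(η_i^k) = −α_{H_{k−1}} x_i ∂_{x_i}` for `4 ≤ i < k`:
    (∀ i : Fin (ℓ + 1), 3 ≤ (i : ℕ) → (i : ℕ) < ℓ →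
      ∀ f : PS (ℓ + 1),
        σ ((X i : PS (ℓ + 1)) * X (Fin.last ℓ) *
            (pderiv i f - pderiv (Fin.last ℓ) f)) =
          -(αprev * (X i * pderiv i (σ f)))) :=
  euler_restriction_of_phi_and_eta_general hℓ αprev hprevsupp hnorm θ hθsupp
end
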